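/- arXiv:2304.11483 — 2 statements merged into one kernel-verified Lean document; each statement's English description precedes it below -/
import Mathlib

section
/- Over homogeneous interval structures, for all propositional letters p and q and every interval I, ⟨B⟩(p ∧ q) holds at I if and only if ⟨B⟩p ∧ ⟨B⟩q holds at I. -/
/-- An interval `[lo, hi]` over the natural numbers. -/
structure Itv where
  lo : ℕ
  hi : ℕ
  le : lo ≤ hi

/-- The singleton interval `[x, x]`. -/
def Itv.sing (x : ℕ) : Itv := ⟨x, x, le_rfl⟩

/-- `J` is a proper prefix of `I`. -/
def isPrefix (J I : Itv) : Prop := J.lo = I.lo ∧ J.hi < I.hi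

/-- `J` is a proper suffix of `I`. -/
def isSuffix (J I : Itv) : Prop := J.hi = I.hi ∧ I.lo < J.lo

/-- Formulas of the logic BE over a signature `Sig`. -/
inductive BE (Sig : Type) : Type
  | atom : Sig → BE Sig
  | neg : BE Sig → BE Sig
  | or : BE Sig → BE Sig → BE Sig
  | diaB : BE Sig → BE Sig
  | diaE : BE Sig → BE Sig

/-- Satisfaction of a BE formula at an interval, given a labelling `σ`. -/
def sat {Sig : Type} (σ : Itv → Set Sig) : Itv → BE Sig → Prop
  | I, .atom p => p ∈ σ I
  | I, .neg φ => ¬ sat σ I φ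
  | I, .or φ ψ => sat σ I φ ∨ sat σ I ψ
  | I, .diaB φ => ∃ J, isPrefix J I ∧ sat σ J φ
  | I, .diaE φ => ∃ J, isSuffix J I ∧ sat σ J φ

/-- Conjunction, defined from negation and disjunction. -/
def BE.and {Sig : Type} (a b : BE Sig) : BE Sig := .neg (.or (.neg a) (.neg b))

/-- The box modality `[B]`. -/
def BE.boxB {Sig : Type} (a : BE Sig) : BE Sig := .neg (.diaB (.neg a))

/-- The box modality `[E]`. -/
def BE.boxE {Sig : Type} (a : BE Sig) : BE Sig := .neg (.diaE (.neg a))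

/-- A contradiction `p ∧ ¬p`. -/
def BE.ffalse {Sig : Type} (p : Sig) : BE Sig := BE.and (.atom p) (.neg (.atom p))

/-- The formula `π = [B]⊥`, true exactly at singleton intervals. -/
def BE.pi {Sig : Type} (p : Sig) : BE Sig := BE.boxB (BE.ffalse p)

/-- A labelling is homogeneous if the label of any interval is the
intersection of the labels of its singleton sub-intervals. -/
def Homog {Sig : Type} (σ : Itv → Set Sig) : Prop :=
  ∀ I : Itv, σ I = {p | ∀ x, I.lo ≤ x → x ≤ I.hi → p ∈ σ (Itv.sing x)}

/-! Under homogeneity a letter true at an interval is true at each of its subintervals. Two proper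
prefixes of `I` are nested, so the shorter one carries both letters. -/

theorem Homog.mem_of_subinterval {Sig : Type} {σ : Itv → Set Sig} (h : Homog σ) {J K : Itv}
    (hlo : K.lo ≤ J.lo) (hhi : J.hi ≤ K.hi) {p : Sig} (hp : p ∈ σ K) : p ∈ σ J := by
  rw [h] at hp ⊢
  exact fun x hx hx' => hp x (hlo.trans hx) (hx'.trans hhi)

theorem sat_and {Sig : Type} {σ : Itv → Set Sig} {I : Itv} {a b : BE Sig} :
    sat σ I (a.and b) ↔ sat σ I a ∧ sat σ I b := by
  simp only [BE.and, sat, not_or, not_not]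

/-- Over homogeneous interval structures, `⟨B⟩(p ∧ q)` is equivalent to
`⟨B⟩p ∧ ⟨B⟩q` for propositional letters `p`, `q`. -/
theorem diaB_and_distrib {Sig : Type} (σ : Itv → Set Sig) (h : Homog σ)
    (p q : Sig) (I : Itv) :
    sat σ I (.diaB (BE.and (.atom p) (.atom q))) ↔
    sat σ I (.diaB (.atom p)) ∧ sat σ I (.diaB (.atom q)) := by
  simp only [sat]
  constructor
  · rintro ⟨J, hJ, hpq⟩
    rw [sat_and] at hpq
    exact ⟨⟨J, hJ, hpq.1⟩, J, hJ, hpq.2⟩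
  · rintro ⟨⟨J₁, hJ₁, hp⟩, J₂, hJ₂, hq⟩
    have hlo : J₁.lo = J₂.lo := hJ₁.1.trans hJ₂.1.symm
    rcases le_total J₁.hi J₂.hi with h₁₂ | h₂₁
    · exact ⟨J₁, hJ₁, sat_and.2 ⟨hp, h.mem_of_subinterval hlo.ge h₁₂ hq⟩⟩
    · exact ⟨J₂, hJ₂, sat_and.2 ⟨h.mem_of_subinterval hlo.le h₂₁ hp, hq⟩⟩
end

section
/- Let S be an interval structure, φ a BE formula in homogeneous normal form, and let I, J be non-singleton intervals with the same φ-profile. Then S,I ⊨ φ if and only if S,J ⊨ φ, provided φ is a Boolean combination of formulas of the form ⟨B⟩α with α ∈ B(φ), ⟨E⟩α with α ∈ E(φ), and formulas π and π∧p that are false at non-singleton intervals. -/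
/-- The `φ`-profile of an interval, given the sets `Bφ` and `Eφ` of arguments
of outermost `⟨B⟩` and `⟨E⟩` subformulas of `φ`. -/
def profile {Sig : Type} (σ : Itv → Set Sig) (Bφ Eφ : Set (BE Sig))
    (I : Itv) : Set (BE Sig) × Set (BE Sig) :=
  ({α | α ∈ Bφ ∧ ∃ J, isPrefix J I ∧ sat σ J α},
   {α | α ∈ Eφ ∧ ∃ J, isSuffix J I ∧ sat σ J α})

/-- Boolean combinations of formulas `⟨B⟩α` with `α ∈ Bφ`, `⟨E⟩α` with
`α ∈ Eφ`, and formulas (such as `π` and `π ∧ p`) that are false at all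
non-singleton intervals. -/
inductive BC {Sig : Type} (σ : Itv → Set Sig) (Bφ Eφ : Set (BE Sig)) :
    BE Sig → Prop
  | diaB {α} : α ∈ Bφ → BC σ Bφ Eφ (.diaB α)
  | diaE {α} : α ∈ Eφ → BC σ Bφ Eφ (.diaE α)
  | base {φ} : (∀ I : Itv, I.lo < I.hi → ¬ sat σ I φ) → BC σ Bφ Eφ φ
  | neg {φ} : BC σ Bφ Eφ φ → BC σ Bφ Eφ (.neg φ)
  | or {φ ψ} : BC σ Bφ Eφ φ → BC σ Bφ Eφ ψ → BC σ Bφ Eφ (.or φ ψ)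

section Profile

variable {Sig : Type} {σ : Itv → Set Sig} {Bφ Eφ : Set (BE Sig)} {α : BE Sig} {I : Itv}

theorem sat_diaB_iff_mem_profile_fst (hα : α ∈ Bφ) :
    sat σ I (.diaB α) ↔ α ∈ (profile σ Bφ Eφ I).1 :=
  ⟨fun h => ⟨hα, h⟩, And.right⟩

theorem sat_diaE_iff_mem_profile_snd (hα : α ∈ Eφ) :
    sat σ I (.diaE α) ↔ α ∈ (profile σ Bφ Eφ I).2 :=
  ⟨fun h => ⟨hα, h⟩, And.right⟩

end Profile

/-- Non-singleton intervals with the same `φ`-profile agree on `φ`, for `φ`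
a Boolean combination as above. -/
theorem profile_determines {Sig : Type} (σ : Itv → Set Sig)
    (Bφ Eφ : Set (BE Sig)) (φ : BE Sig) (hφ : BC σ Bφ Eφ φ)
    (I J : Itv) (hI : I.lo < I.hi) (hJ : J.lo < J.hi)
    (hprof : profile σ Bφ Eφ I = profile σ Bφ Eφ J) :
    sat σ I φ ↔ sat σ J φ := by
  induction hφ with
  | diaB hα =>
    rw [sat_diaB_iff_mem_profile_fst hα, sat_diaB_iff_mem_profile_fst hα, hprof]
  | diaE hα =>
    rw [sat_diaE_iff_mem_profile_snd hα, sat_diaE_iff_mem_profile_snd hα, hprof]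
  | base hfalse => exact iff_of_false (hfalse I hI) (hfalse J hJ)
  | neg _ ih => exact not_congr ih
  | or _ _ ih₁ ih₂ => exact or_congr ih₁ ih₂
end
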